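/- Let (I,J) ∈ 𝓘, let p_data, p_G : X → (0,∞) be positive functions, let π_c > 0, q_c > 0, and s_c > 0 for each c ∈ N, and let g_c, h_c : X → [0,∞) be functions with h_c > 0 for the fixed class c below. Define D_v(x) := p_data(x)/(p_data(x) + p_G(x)), D_r(c|x) := g_c(x) · q_c / p_data(x), D_f(c|x) := h_c(x) · s_c / p_G(x), and r_{(I,J)}(x) := (min_{i∈I} (π_i/q_i) D_r(i|x) − max over ({(π_j/q_j) D_r(j|x) : j ∈ J} ∪ {0}))⁺. Let π_{(I,J)} > 0 and p_{(I,J)}(x) := π_{(I,J)}^{−1} · (min_{i∈I} π_i g_i(x) − max over ({π_j g_j(x) : j ∈ J} ∪ {0}))⁺. Then for any fixed class c ∈ N with h_c(x) > 0 for all x, and all x, x' ∈ X with r_{(I,J)}(x) > 0, the conditional acceptance-ratio identity holds: (p_{(I,J)}(x')/h_c(x')) / (p_{(I,J)}(x)/h_c(x)) = (r_{(I,J)}(x') · D_f(c|x) · (D_v(x)^{−1} − 1)) / (r_{(I,J)}(x) · D_f(c|x') · (D_v(x')^{−1} − 1)). -/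

import Mathlib

/-!
Both `r` and `p` are positive parts of the same min–max margin, taken of the class scores
`(π i / q i) * Dr i x = π i * g i x / pdata x` and `π i * g i x` respectively. The margin is
positively homogeneous, so `r = πIJ * p / pdata`; with `Dv⁻¹ - 1 = pG / pdata` and
`Df c = h c * s c / pG`, every factor other than `p / h c` cancels from the right-hand side.
-/

open Finset

section

variable {ι : Type*}

noncomputable def posMargin (I J : Finset ι) (hI : I.Nonempty) (f : ι → ℝ) : ℝ :=
  max (I.inf' hI f - (insert 0 (J.image f)).max' (insert_nonempty _ _)) 0

theorem posMargin_const_mul (I J : Finset ι) (hI : I.Nonempty) (f : ι → ℝ) {a : ℝ}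
    (ha : 0 ≤ a) : posMargin I J hI (fun i => a * f i) = a * posMargin I J hI f := by
  have hinf : I.inf' hI (fun i => a * f i) = a * I.inf' hI f :=
    (apply_inf'_eq_inf'_comp hI (a * ·) fun x y => mul_min_of_nonneg x y ha).symm
  have hmax : (insert 0 (J.image fun i => a * f i)).max' (insert_nonempty _ _)
      = a * (insert 0 (J.image f)).max' (insert_nonempty _ _) := by
    have hset : insert 0 (J.image fun i => a * f i) = (insert 0 (J.image f)).image (a * ·) := by
      rw [image_insert, mul_zero, image_image]; rfl
    simp only [hset, max'_image (monotone_mul_left_of_nonneg ha)]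
  rw [posMargin, posMargin, hinf, hmax, ← mul_sub, mul_max_of_nonneg _ _ ha, mul_zero]

end

theorem inv_div_add_sub_one {a : ℝ} (b : ℝ) (ha : a ≠ 0) : (a / (a + b))⁻¹ - 1 = b / a := by
  rw [inv_div, add_div, div_self ha, add_sub_cancel_left]

theorem s2m_acceptance_ratio_conditional_general {X : Type*} {ι : Type*}
    (I J : Finset ι) (hI : I.Nonempty)
    (pdata pG : X → ℝ) (hpdata : ∀ x, 0 < pdata x) (hpG : ∀ x, 0 < pG x)
    (π q s : ι → ℝ) (hq : ∀ c, 0 < q c) (hs : ∀ c, 0 < s c)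
    (g h : ι → X → ℝ)
    (Dv : X → ℝ) (hDv : ∀ x, Dv x = pdata x / (pdata x + pG x))
    (Dr : ι → X → ℝ) (hDr : ∀ c x, Dr c x = g c x * q c / pdata x)
    (Df : ι → X → ℝ) (hDf : ∀ c x, Df c x = h c x * s c / pG x)
    (r : X → ℝ)
    (hr : ∀ x, r x = max (I.inf' hI (fun i => (π i / q i) * Dr i x) -
        (insert (0 : ℝ) (J.image fun j => (π j / q j) * Dr j x)).max'
          (insert_nonempty _ _)) 0)
    (πIJ : ℝ) (hπIJ : 0 < πIJ)
    (p : X → ℝ)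
    (hp : ∀ x, p x = πIJ⁻¹ * max (I.inf' hI (fun i => π i * g i x) -
        (insert (0 : ℝ) (J.image fun j => π j * g j x)).max' (insert_nonempty _ _)) 0)
    (c : ι) (hc : ∀ x, 0 < h c x) :
    ∀ x x' : X, 0 < r x →
      (p x' / h c x') / (p x / h c x)
        = (r x' * Df c x * ((Dv x)⁻¹ - 1)) / (r x * Df c x' * ((Dv x')⁻¹ - 1)) := by
  intro x x' _
  have hr_eq : ∀ y, r y = (pdata y)⁻¹ * (πIJ * p y) := by
    intro y
    have hscale : (fun i => π i / q i * Dr i y) = fun i => (pdata y)⁻¹ * (π i * g i y) := by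
      funext i
      rw [hDr]
      field_simp [(hq i).ne', (hpdata y).ne']
    rw [hr y, hp y]
    change posMargin I J hI _ = _ * (_ * (_ * posMargin I J hI _))
    rw [hscale, posMargin_const_mul _ _ _ _ (inv_nonneg.2 (hpdata y).le),
      mul_inv_cancel_left₀ hπIJ.ne']
  rw [hr_eq x, hr_eq x', hDf, hDf, hDv, hDv, inv_div_add_sub_one _ (hpdata x).ne',
    inv_div_add_sub_one _ (hpdata x').ne']
  field_simp [(hpdata x).ne', (hpdata x').ne', (hpG x).ne', (hpG x').ne', (hc x).ne',
    (hc x').ne', (hs c).ne']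

/-- Equation (7) of the paper (acceptance ratio for conditional GANs): with optimal classifiers
`D_v(x) = p_data(x)/(p_data(x)+p_G(x))`, `D_r(c|x) = g_c(x) q_c / p_data(x)`,
`D_f(c|x) = h_c(x) s_c / p_G(x)`, and `r_{(I,J)}`, `p_{(I,J)}` as in the main theorem, for a
fixed class `c` with `h_c > 0`, one has `(p_{(I,J)}(x')/h_c(x')) / (p_{(I,J)}(x)/h_c(x))
  = r_{(I,J)}(x') D_f(c|x) (D_v(x)⁻¹ − 1) / (r_{(I,J)}(x) D_f(c|x') (D_v(x')⁻¹ − 1))`. -/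
theorem s2m_acceptance_ratio_conditional {X : Type*} {ι : Type*} [Fintype ι] [DecidableEq ι]
    (I J : Finset ι) (hI : I.Nonempty) (hd : Disjoint I J)
    (pdata pG : X → ℝ) (hpdata : ∀ x, 0 < pdata x) (hpG : ∀ x, 0 < pG x)
    (π q s : ι → ℝ) (hπ : ∀ c, 0 < π c) (hq : ∀ c, 0 < q c) (hs : ∀ c, 0 < s c)
    (g h : ι → X → ℝ) (hg : ∀ c x, 0 ≤ g c x) (hh : ∀ c x, 0 ≤ h c x)
    (Dv : X → ℝ) (hDv : ∀ x, Dv x = pdata x / (pdata x + pG x))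
    (Dr : ι → X → ℝ) (hDr : ∀ c x, Dr c x = g c x * q c / pdata x)
    (Df : ι → X → ℝ) (hDf : ∀ c x, Df c x = h c x * s c / pG x)
    (r : X → ℝ)
    (hr : ∀ x, r x = max (I.inf' hI (fun i => (π i / q i) * Dr i x) -
        (insert (0 : ℝ) (J.image fun j => (π j / q j) * Dr j x)).max'
          (insert_nonempty _ _)) 0)
    (πIJ : ℝ) (hπIJ : 0 < πIJ)
    (p : X → ℝ)
    (hp : ∀ x, p x = πIJ⁻¹ * max (I.inf' hI (fun i => π i * g i x) -
        (insert (0 : ℝ) (J.image fun j => π j * g j x)).max' (insert_nonempty _ _)) 0)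
    (c : ι) (hc : ∀ x, 0 < h c x) :
    ∀ x x' : X, 0 < r x →
      (p x' / h c x') / (p x / h c x)
        = (r x' * Df c x * ((Dv x)⁻¹ - 1)) / (r x * Df c x' * ((Dv x')⁻¹ - 1)) :=
  s2m_acceptance_ratio_conditional_general I J hI pdata pG hpdata hpG π q s hq hs g h Dv hDv Dr hDr
    Df hDf r hr πIJ hπIJ p hp c hc
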